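/- Lefschetz-type injectivity: on a complex vector space V of complex dimension n ≥ 2 with a nondegenerate (1,1)-form ω, the linear map from 1-covectors to 3-covectors given by η ↦ η ∧ ω is injective. -/

import Mathlib

/-!
If `η ≠ 0` and `η ∧ ω = 0`, evaluating `η ∧ ω` at a vector `x` with `η x ≠ 0` expresses `ω`
as `η ∧ β` for the covector `β = ω x / η x`. Such a form has rank at most two, so on a space
of dimension `2n ≥ 4` it vanishes on the nonzero common kernel of `η` and `β`, contradicting
nondegeneracy.
-/

namespace LinearMap.BilinForm

variable {K V : Type*} [Field K] [AddCommGroup V] [Module K V]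

theorem eq_wedge_of_wedge_eq_zero {η : Module.Dual K V} {ω : LinearMap.BilinForm K V}
    (hwedge : ∀ x y z, η x * ω y z - η y * ω x z + η z * ω x y = 0) {x : V} (hx : η x ≠ 0)
    (y z : V) : ω y z = η y * ((η x)⁻¹ • ω x) z - η z * ((η x)⁻¹ • ω x) y := by
  have h := hwedge x y z
  simp only [LinearMap.smul_apply, smul_eq_mul]
  field_simp
  linear_combination h

theorem exists_ne_zero_map_eq_zero_of_two_lt_finrank [FiniteDimensional K V]
    (η β : Module.Dual K V) (hV : 2 < Module.finrank K V) :
    ∃ v ≠ 0, η v = 0 ∧ β v = 0 := by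
  have hker : LinearMap.ker (η.prod β) ≠ ⊥ :=
    LinearMap.ker_ne_bot_of_finrank_lt (by simpa [Module.finrank_prod] using hV)
  obtain ⟨v, hv, hv0⟩ := (Submodule.ne_bot_iff _).mp hker
  rw [LinearMap.mem_ker, LinearMap.prod_apply, Prod.mk_eq_zero] at hv
  exact ⟨v, hv0, hv⟩

theorem dual_eq_zero_of_wedge_eq_zero [FiniteDimensional K V] (hV : 2 < Module.finrank K V)
    {ω : LinearMap.BilinForm K V} (hnd : ∀ v, (∀ w, ω v w = 0) → v = 0) {η : Module.Dual K V}
    (hwedge : ∀ x y z, η x * ω y z - η y * ω x z + η z * ω x y = 0) : η = 0 := by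
  by_contra hη
  obtain ⟨x, hx⟩ : ∃ x, η x ≠ 0 := by
    by_contra! h
    exact hη (LinearMap.ext h)
  obtain ⟨v, hv0, hηv, hβv⟩ :=
    exists_ne_zero_map_eq_zero_of_two_lt_finrank η ((η x)⁻¹ • ω x) hV
  refine hv0 (hnd v fun w => ?_)
  rw [eq_wedge_of_wedge_eq_zero hwedge hx, hηv, hβv, zero_mul, mul_zero, sub_zero]

end LinearMap.BilinForm

theorem stmt_6_general {V : Type*} [AddCommGroup V] [Module ℝ V]
    [FiniteDimensional ℝ V]
    (n : ℕ) (hn : 2 ≤ n) (hdim : Module.finrank ℝ V = 2 * n)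
    (ω : LinearMap.BilinForm ℝ V)
    (hnd : ∀ v, (∀ w, ω v w = 0) → v = 0) :          -- ω nondegenerate
    Function.Injective (fun η : Module.Dual ℝ V =>
      fun x y z : V => η x * ω y z - η y * ω x z + η z * ω x y) := by
  intro η₁ η₂ h
  rw [← sub_eq_zero]
  refine LinearMap.BilinForm.dual_eq_zero_of_wedge_eq_zero (by omega) hnd fun x y z => ?_
  have hxyz := congrFun (congrFun (congrFun h x) y) z
  simp only [LinearMap.sub_apply]
  linear_combination hxyz

/-- Lefschetz-type injectivity: on a real vector space V of dimension 2n with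
n ≥ 2, equipped with a nondegenerate alternating 2-form ω, the map
η ↦ η ∧ ω from 1-covectors to 3-covectors is injective. The 3-covector
(η ∧ ω)(x,y,z) = η(x)ω(y,z) − η(y)ω(x,z) + η(z)ω(x,y). -/
theorem stmt_6 {V : Type*} [AddCommGroup V] [Module ℝ V]
    [FiniteDimensional ℝ V]
    (n : ℕ) (hn : 2 ≤ n) (hdim : Module.finrank ℝ V = 2 * n)
    (ω : LinearMap.BilinForm ℝ V)
    (halt : ∀ v, ω v v = 0)                          -- ω alternating
    (hnd : ∀ v, (∀ w, ω v w = 0) → v = 0) :          -- ω nondegenerate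
    Function.Injective (fun η : Module.Dual ℝ V =>
      fun x y z : V => η x * ω y z - η y * ω x z + η z * ω x y) :=
  stmt_6_general n hn hdim ω hnd
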